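/- arXiv:2111.13286 — 3 statements merged into one kernel-verified Lean document; each statement's English description precedes it below -/
import Mathlib

section
/- (Single comparison lemma.) Fix an integer c and a multisegment 𝔥. Let 𝔪₁ ∈ Mult^a_c and let 𝔪₂ be obtained from 𝔪₁ by replacing one segment [c,b] with a longer segment [c,b''] (b'' > b). Then 𝔰(𝔪₁, 𝔥) ≤^a_c 𝔰(𝔪₂, 𝔥), where 𝔰(·, 𝔥) is the multiset of first removal segments and the order ≤^a_c is extended so that any finite value is below the 'undefined' value ∞ (arising when some segment fails to be admissible at its stage). -/
set_option linter.unusedVariables false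

/-- A segment `[a, b]` of integers, with `a ≤ b`. -/
@[ext] structure Seg where
  a : ℤ
  b : ℤ
  hle : a ≤ b

namespace Seg

instance : DecidableEq Seg := fun Δ Δ' =>
  if h : Δ.a = Δ'.a ∧ Δ.b = Δ'.b then .isTrue (Seg.ext h.1 h.2)
  else .isFalse fun he => h ⟨congrArg Seg.a he, congrArg Seg.b he⟩

instance : LinearOrder Seg :=
  LinearOrder.lift' (fun Δ => toLex (Δ.a, Δ.b)) fun Δ Δ' h => by
    have h2 : (Δ.a, Δ.b) = (Δ'.a, Δ'.b) := toLex.injective h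
    exact Seg.ext (congrArg Prod.fst h2) (congrArg Prod.snd h2)

/-- `Δ.Sub Δ'` means `Δ ⊆ Δ'` as sets of integers. -/
def Sub (Δ Δ' : Seg) : Prop := Δ'.a ≤ Δ.a ∧ Δ.b ≤ Δ'.b

/-- Two segments are linked if their union is a segment (they overlap or are adjacent)
and neither contains the other. -/
def Linked (Δ Δ' : Seg) : Prop :=
  Δ.a ≤ Δ'.b + 1 ∧ Δ'.a ≤ Δ.b + 1 ∧ ¬ Δ.Sub Δ' ∧ ¬ Δ'.Sub Δ

/-- `Δ < Δ'` : linked with smaller right endpoint. -/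
def lt' (Δ Δ' : Seg) : Prop := Linked Δ Δ' ∧ Δ.b < Δ'.b

/-- relative length of a segment -/
def len (Δ : Seg) : ℤ := Δ.b - Δ.a + 1

end Seg

/-- The possibly-empty segment `[x,y]`, as a multiset (empty if `x > y`). -/
def seg? (x y : ℤ) : Multiset Seg := if h : x ≤ y then {⟨x, y, h⟩} else 0

/-- Union of two segments, as the segment `[min, max]`. -/
def unionSeg (Δ Δ' : Seg) : Seg :=
  ⟨min Δ.a Δ'.a, max Δ.b Δ'.b, (min_le_left _ _).trans (Δ.hle.trans (le_max_left _ _))⟩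

/-- Intersection of two segments, as a (possibly empty) multiset. -/
def interMS (Δ Δ' : Seg) : Multiset Seg := seg? (max Δ.a Δ'.a) (min Δ.b Δ'.b)

/-- `⁻Δ = [a+1,b]`, as a possibly empty multiset. -/
def lminus (Δ : Seg) : Multiset Seg := seg? (Δ.a + 1) Δ.b

/-- sub-multiset of segments of `m` with left endpoint `c` (i.e. `m[c]`) -/
def atLeft (m : Multiset Seg) (c : ℤ) : Multiset Seg := m.filter fun S => S.a = c

/-- sub-multiset of segments of `m` with right endpoint `c` (i.e. `m⟨c⟩`) -/
def atRight (m : Multiset Seg) (c : ℤ) : Multiset Seg := m.filter fun S => S.b = c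

/-- `ε_{[x,y]}(m)` : number of segments of `m` with left endpoint `x` and right endpoint `≥ y`. -/
def eps (x y : ℤ) (m : Multiset Seg) : ℕ := (m.filter fun S => S.a = x ∧ y ≤ S.b).card

/-- A segment `Δ = [a,b]` is admissible to `h` if `h` contains some `[a,c]` with `c ≥ b`. -/
def SegAdm (Δ : Seg) (h : Multiset Seg) : Prop := ∃ Δ' ∈ h, Δ'.a = Δ.a ∧ Δ.b ≤ Δ'.b

noncomputable instance (Δ : Seg) (h : Multiset Seg) : Decidable (SegAdm Δ h) := Classical.dec _

/-- candidates for the first segment of the removal sequence -/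
def firstCand (Δ : Seg) (h : Multiset Seg) : Finset Seg :=
  h.toFinset.filter fun Δ' => Δ'.a = Δ.a ∧ Δ.b ≤ Δ'.b

/-- candidates for the next segment of the removal sequence -/
def nextCand (Δ prev : Seg) (h : Multiset Seg) : Finset Seg :=
  h.toFinset.filter fun Δ'' => prev.a < Δ''.a ∧ Δ''.b < prev.b ∧ Δ.b ≤ Δ''.b

/-- tail of the removal sequence: recursively pick the lexicographically minimal
strictly nested segment -/
def removalTail (Δ : Seg) (h : Multiset Seg) (prev : Seg) : List Seg :=
  if hc : (nextCand Δ prev h).Nonempty then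
    (nextCand Δ prev h).min' hc :: removalTail Δ h ((nextCand Δ prev h).min' hc)
  else []
termination_by (prev.b - prev.a).toNat
decreasing_by
  have hmem := Finset.min'_mem (nextCand Δ prev h) hc
  have h4 := ((nextCand Δ prev h).min' hc).hle
  simp only [nextCand, Finset.mem_filter] at hmem h4
  obtain ⟨-, h1, h2, h3⟩ := hmem
  simp only [nextCand]
  omega

/-- The removal sequence for `(Δ, h)`. -/
def removalSeq (Δ : Seg) (h : Multiset Seg) : List Seg :=
  if hc : (firstCand Δ h).Nonempty then
    (firstCand Δ h).min' hc :: removalTail Δ h ((firstCand Δ h).min' hc)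
  else []

/-- `Υ(Δ, h)` : first segment of the removal sequence (junk value `Δ` if undefined). -/
noncomputable def Upsilon (Δ : Seg) (h : Multiset Seg) : Seg :=
  if hc : (firstCand Δ h).Nonempty then (firstCand Δ h).min' hc else Δ

/-- truncations of the removal sequence: `Δ_i^{tr} = [a_{i+1}, b_i]`, `Δ_r^{tr} = [b(Δ)+1, b_r]` -/
def truncs (Δ : Seg) : List Seg → Multiset Seg
  | [] => 0
  | [Δr] => seg? (Δ.b + 1) Δr.b
  | Δi :: Δj :: rest => seg? Δj.a Δi.b + truncs Δ (Δj :: rest)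

/-- The removal process `𝔯(Δ, h)`. -/
def removal (Δ : Seg) (h : Multiset Seg) : Multiset Seg :=
  (h - (removalSeq Δ h : Multiset Seg)) + truncs Δ (removalSeq Δ h)

/-- `𝔯(𝔫, h)` for a multisegment `𝔫`, performed along an ascending
(lexicographically sorted) enumeration of `𝔫`; `none` plays the role of `∞`. -/
noncomputable def removalM (n h : Multiset Seg) : Option (Multiset Seg) :=
  (n.sort (· ≤ ·)).foldl
    (fun acc Δ => acc.bind fun h' => if SegAdm Δ h' then some (removal Δ h') else none)
    (some h)

/-- sequential admissibility of a list of segments to a multisegment -/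
def listAdm : List Seg → Multiset Seg → Prop
  | [], _ => True
  | Δ :: rest, h => SegAdm Δ h ∧ listAdm rest (removal Δ h)

/-- multiset of first removal segments along a list (`none` = `∞`) -/
noncomputable def sList : List Seg → Multiset Seg → Option (Multiset Seg)
  | [], _ => some 0
  | Δ :: rest, h =>
    if SegAdm Δ h then (sList rest (removal Δ h)).map fun s => Upsilon Δ h ::ₘ s
    else none

/-- `𝔰(m, h)` : multiset of first removal segments. -/
noncomputable def sMulti (m h : Multiset Seg) : Option (Multiset Seg) :=
  sList (m.sort (· ≤ ·)) h

/-- the order `≤^a_c` on multisegments at a left point (compare sorted-decreasing lists) -/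
def leAc (m₁ m₂ : Multiset Seg) : Prop :=
  ∃ l₁ l₂ : List Seg, (l₁ : Multiset Seg) = m₁ ∧ (l₂ : Multiset Seg) = m₂ ∧
    l₁.Pairwise (fun S T => T.b ≤ S.b) ∧ l₂.Pairwise (fun S T => T.b ≤ S.b) ∧
    l₁.length ≤ l₂.length ∧
    ∀ i (h1 : i < l₁.length) (h2 : i < l₂.length), (l₁.get ⟨i, h1⟩).b ≤ (l₂.get ⟨i, h2⟩).b

/-- extension of `≤^a_c` with `∞ = none` on top -/
def leAcO : Option (Multiset Seg) → Option (Multiset Seg) → Prop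
  | _, none => True
  | some m₁, some m₂ => leAc m₁ m₂
  | none, some _ => False

/-- elementary intersection-union operation: `m₂` is obtained from `m₁` by replacing two
linked segments by their union and (if nonempty) intersection -/
def elemIU (m₁ m₂ : Multiset Seg) : Prop :=
  ∃ Δ ∈ m₁, ∃ Δ' ∈ m₁.erase Δ, Seg.Linked Δ Δ' ∧
    m₂ = (((m₁.erase Δ).erase Δ') + {unionSeg Δ Δ'}) + interMS Δ Δ'

/-- `leZ m₂ m₁` : `m₂ ≤_Z m₁`, i.e. `m₂` is obtained from `m₁` by a finite sequence of
elementary intersection-union operations -/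
def leZ (m₂ m₁ : Multiset Seg) : Prop := Relation.ReflTransGen elemIU m₁ m₂

/-- a list of segments is in an ascending order -/
def ascList (l : List Seg) : Prop := l.Pairwise fun Δ Δ' => ¬ Seg.lt' Δ' Δ

/-- the intersection of two segments, as a list of length ≤ 1 -/
def interList (Δ Δ' : Seg) : List Seg :=
  if h : max Δ.a Δ'.a ≤ min Δ.b Δ'.b then [⟨max Δ.a Δ'.a, min Δ.b Δ'.b, h⟩] else []

/-- the list `[Δ ∩ Δ', Δ ∪ Δ']` (intersection dropped if empty) -/
def iuList (Δ Δ' : Seg) : List Seg := interList Δ Δ' ++ [unionSeg Δ Δ']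

lemma ptwise_desc (l₁ l₂ : List Seg)
    (hs₁ : l₁.Pairwise fun S T => T.b ≤ S.b) (hs₂ : l₂.Pairwise fun S T => T.b ≤ S.b)
    (hlen : l₁.length = l₂.length)
    (hcnt : ∀ t : ℤ, l₁.countP (fun S => t ≤ S.b) ≤ l₂.countP (fun S => t ≤ S.b)) :
    ∀ i (h1 : i < l₁.length) (h2 : i < l₂.length), (l₁.get ⟨i,h1⟩).b ≤ (l₂.get ⟨i,h2⟩).b := by
  intro i h1 h2
  by_contra hlt
  push_neg at hlt
  set t := (l₁.get ⟨i, h1⟩).b with ht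
  have hlow : i + 1 ≤ l₁.countP (fun S => t ≤ S.b) := by
    have hsplit : l₁.countP (fun S => t ≤ S.b)
        = (l₁.take (i+1)).countP (fun S => t ≤ S.b) + (l₁.drop (i+1)).countP (fun S => t ≤ S.b) := by
      rw [← List.countP_append, List.take_append_drop]
    have hall : ∀ a ∈ l₁.take (i+1), (fun S => decide (t ≤ S.b)) a = true := by
      intro a ha
      rcases List.mem_iff_get.mp ha with ⟨⟨j, hj⟩, rfl⟩
      have hj' : j < l₁.length := by
        have := hj; simp [List.length_take] at this; omega
      have hget : (l₁.take (i+1)).get ⟨j, hj⟩ = l₁.get ⟨j, hj'⟩ := by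
        simp [List.get_eq_getElem, List.getElem_take]
      rw [hget]
      simp only [decide_eq_true_eq]
      have hjle : j ≤ i := by simp [List.length_take] at hj; omega
      rcases Nat.eq_or_lt_of_le hjle with rfl | hjlt
      · simp [ht]
      · exact List.Pairwise.rel_get_of_lt hs₁ (by simp [hjlt])
    have := List.countP_eq_length.mpr hall
    rw [hsplit, this, List.length_take]
    omega
  have hhigh : l₂.countP (fun S => t ≤ S.b) ≤ i := by
    have hsplit : l₂.countP (fun S => t ≤ S.b)
        = (l₂.take i).countP (fun S => t ≤ S.b) + (l₂.drop i).countP (fun S => t ≤ S.b) := by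
      rw [← List.countP_append, List.take_append_drop]
    have hzero : (l₂.drop i).countP (fun S => t ≤ S.b) = 0 := by
      rw [List.countP_eq_zero]
      intro a ha
      rcases List.mem_iff_get.mp ha with ⟨⟨k, hk⟩, rfl⟩
      have hk' : i + k < l₂.length := by simp at hk; omega
      have hget : (l₂.drop i).get ⟨k, hk⟩ = l₂.get ⟨i + k, hk'⟩ := by
        simp [List.get_eq_getElem, List.getElem_drop]
      rw [hget]
      simp only [decide_eq_true_eq, not_le]
      have : (l₂.get ⟨i + k, hk'⟩).b ≤ (l₂.get ⟨i, h2⟩).b := by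
        rcases Nat.eq_zero_or_pos k with rfl | hkpos
        · simp
        · exact List.Pairwise.rel_get_of_lt hs₂ (by simp; omega)
      omega
    have hle : (l₂.take i).countP (fun S => t ≤ S.b) ≤ i := by
      have := List.countP_le_length (l := l₂.take i) (p := fun S => decide (t ≤ S.b))
      simp [List.length_take] at this ⊢
      omega
    omega
  have := hcnt t
  omega

lemma ptwise_asc (l₁ l₂ : List Seg)
    (hs₁ : l₁.Pairwise fun S T => S.b ≤ T.b) (hs₂ : l₂.Pairwise fun S T => S.b ≤ T.b)
    (hlen : l₁.length = l₂.length)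
    (hcnt : ∀ t : ℤ, l₁.countP (fun S => t ≤ S.b) ≤ l₂.countP (fun S => t ≤ S.b)) :
    ∀ i (h1 : i < l₁.length) (h2 : i < l₂.length), (l₁.get ⟨i,h1⟩).b ≤ (l₂.get ⟨i,h2⟩).b := by
  intro i h1 h2
  by_contra hlt
  push_neg at hlt
  set t := (l₁.get ⟨i, h1⟩).b with ht
  have hlow : l₁.length - i ≤ l₁.countP (fun S => t ≤ S.b) := by
    have hsplit : l₁.countP (fun S => t ≤ S.b)
        = (l₁.take i).countP (fun S => t ≤ S.b) + (l₁.drop i).countP (fun S => t ≤ S.b) := by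
      rw [← List.countP_append, List.take_append_drop]
    have hall : ∀ a ∈ l₁.drop i, (fun S => decide (t ≤ S.b)) a = true := by
      intro a ha
      rcases List.mem_iff_get.mp ha with ⟨⟨k, hk⟩, rfl⟩
      have hk' : i + k < l₁.length := by simp at hk; omega
      have hget : (l₁.drop i).get ⟨k, hk⟩ = l₁.get ⟨i + k, hk'⟩ := by
        simp [List.get_eq_getElem, List.getElem_drop]
      rw [hget]
      simp only [decide_eq_true_eq]
      rcases Nat.eq_zero_or_pos k with rfl | hkpos
      · simp [ht]
      · exact le_trans (le_of_eq rfl) (List.Pairwise.rel_get_of_lt hs₁ (by simp; omega))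
    have := List.countP_eq_length.mpr hall
    rw [hsplit, this, List.length_drop]
    omega
  have hhigh : l₂.countP (fun S => t ≤ S.b) ≤ l₂.length - (i + 1) := by
    have hsplit : l₂.countP (fun S => t ≤ S.b)
        = (l₂.take (i+1)).countP (fun S => t ≤ S.b) + (l₂.drop (i+1)).countP (fun S => t ≤ S.b) := by
      rw [← List.countP_append, List.take_append_drop]
    have hzero : (l₂.take (i+1)).countP (fun S => t ≤ S.b) = 0 := by
      rw [List.countP_eq_zero]
      intro a ha
      rcases List.mem_iff_get.mp ha with ⟨⟨j, hj⟩, rfl⟩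
      have hj' : j < l₂.length := by simp [List.length_take] at hj; omega
      have hget : (l₂.take (i+1)).get ⟨j, hj⟩ = l₂.get ⟨j, hj'⟩ := by
        simp [List.get_eq_getElem, List.getElem_take]
      rw [hget]
      simp only [decide_eq_true_eq, not_le]
      have hjle : j ≤ i := by simp [List.length_take] at hj; omega
      have : (l₂.get ⟨j, hj'⟩).b ≤ (l₂.get ⟨i, h2⟩).b := by
        rcases Nat.eq_or_lt_of_le hjle with rfl | hjlt
        · simp
        · exact List.Pairwise.rel_get_of_lt hs₂ (by simp [hjlt])
      omega
    have hle := List.countP_le_length (l := l₂.drop (i+1)) (p := fun S => decide (t ≤ S.b))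
    rw [List.length_drop] at hle
    omega
  have := hcnt t
  omega
section Aux

lemma seg_le_iff (S T : Seg) : S ≤ T ↔ (S.a < T.a ∨ (S.a = T.a ∧ S.b ≤ T.b)) := by
  show toLex (S.a, S.b) ≤ toLex (T.a, T.b) ↔ _
  exact Prod.Lex.le_iff

lemma seg_b_le_of_le {S T : Seg} (h : S ≤ T) (ha : S.a = T.a) : S.b ≤ T.b := by
  rcases (seg_le_iff S T).mp h with h' | h'
  · omega
  · exact h'.2

lemma segAdm_iff_firstCand (Δ : Seg) (h : Multiset Seg) :
    SegAdm Δ h ↔ (firstCand Δ h).Nonempty := by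
  constructor
  · rintro ⟨Δ', hm, h1, h2⟩
    exact ⟨Δ', Finset.mem_filter.mpr ⟨Multiset.mem_toFinset.mpr hm, h1, h2⟩⟩
  · rintro ⟨Δ', hm⟩
    rw [firstCand, Finset.mem_filter, Multiset.mem_toFinset] at hm
    exact ⟨Δ', hm.1, hm.2.1, hm.2.2⟩

lemma upsilon_spec {Δ : Seg} {h : Multiset Seg} (hadm : SegAdm Δ h) :
    Upsilon Δ h ∈ h ∧ (Upsilon Δ h).a = Δ.a ∧ Δ.b ≤ (Upsilon Δ h).b := by
  have hne := (segAdm_iff_firstCand Δ h).mp hadm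
  rw [Upsilon, dif_pos hne]
  have := Finset.min'_mem (firstCand Δ h) hne
  simp only [firstCand, Finset.mem_filter, Multiset.mem_toFinset] at this
  exact this

lemma upsilon_min {Δ : Seg} {h : Multiset Seg} (hadm : SegAdm Δ h)
    {z : Seg} (hz : z ∈ h) (hza : z.a = Δ.a) (hzb : Δ.b ≤ z.b) :
    (Upsilon Δ h).b ≤ z.b := by
  have hne := (segAdm_iff_firstCand Δ h).mp hadm
  have hzc : z ∈ firstCand Δ h :=
    Finset.mem_filter.mpr ⟨Multiset.mem_toFinset.mpr hz, hza, hzb⟩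
  have hle : Upsilon Δ h ≤ z := by
    rw [Upsilon, dif_pos hne]; exact Finset.min'_le _ _ hzc
  exact seg_b_le_of_le hle ((upsilon_spec hadm).2.1.trans hza.symm)

end Aux
section Aux2

lemma removalTail_a_lt (Δ : Seg) (h : Multiset Seg) :
    ∀ (n : ℕ) (prev : Seg), (prev.b - prev.a).toNat ≤ n →
      ∀ x ∈ removalTail Δ h prev, prev.a < x.a := by
  intro n
  induction n with
  | zero =>
    intro prev hn x hx
    rw [removalTail] at hx
    split at hx
    · next hc =>
      set m := (nextCand Δ prev h).min' hc with hmdef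
      have hm := Finset.min'_mem _ hc
      rw [← hmdef] at hm
      simp only [nextCand, Finset.mem_filter] at hm
      have hle := m.hle
      omega
    · simp at hx
  | succ n ih =>
    intro prev hn x hx
    rw [removalTail] at hx
    split at hx
    · next hc =>
      set m := (nextCand Δ prev h).min' hc with hmdef
      have hm := Finset.min'_mem _ hc
      rw [← hmdef] at hm
      simp only [nextCand, Finset.mem_filter] at hm
      rcases List.mem_cons.mp hx with rfl | hx'
      · exact hm.2.1
      · have hle := m.hle
        have := ih m (by omega) x hx'
        omega
    · simp at hx

lemma mem_seg? {x : Seg} {u v : ℤ} (hx : x ∈ seg? u v) : x.a = u ∧ x.b = v := by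
  rw [seg?] at hx
  split at hx
  · rw [Multiset.mem_singleton] at hx; subst hx; exact ⟨rfl, rfl⟩
  · simp at hx

lemma truncs_a (Δ : Seg) :
    ∀ (l : List Seg), (∀ y ∈ l.tail, Δ.a < y.a) → ∀ x ∈ truncs Δ l, Δ.a < x.a := by
  intro l
  induction l with
  | nil => intro _ x hx; simp [truncs] at hx
  | cons Δi rest ih =>
    cases rest with
    | nil =>
      intro _ x hx
      rw [truncs] at hx
      have := (mem_seg? hx).1
      have := Δ.hle
      omega
    | cons Δj rest' =>
      intro hy x hx
      rw [truncs, Multiset.mem_add] at hx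
      rcases hx with hx | hx
      · have := (mem_seg? hx).1
        have : Δ.a < Δj.a := hy Δj (List.mem_cons_self)
        omega
      · exact ih (fun y hyy => hy y (List.mem_cons_of_mem _ hyy)) x hx

end Aux2
section Aux3

lemma firstCand_atLeft {c : ℤ} (Δ : Seg) (h : Multiset Seg) (hc : Δ.a = c) :
    firstCand Δ (atLeft h c) = firstCand Δ h := by
  apply Finset.ext
  intro x
  simp only [firstCand, atLeft, Finset.mem_filter, Multiset.mem_toFinset, Multiset.mem_filter]
  constructor
  · rintro ⟨⟨h1, h2⟩, h3⟩; exact ⟨h1, h3⟩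
  · rintro ⟨h1, h3⟩; exact ⟨⟨h1, h3.1.trans hc⟩, h3⟩

lemma segAdm_atLeft {c : ℤ} (Δ : Seg) (h : Multiset Seg) (hc : Δ.a = c) :
    SegAdm Δ (atLeft h c) ↔ SegAdm Δ h := by
  rw [segAdm_iff_firstCand, segAdm_iff_firstCand, firstCand_atLeft Δ h hc]

lemma upsilon_atLeft {c : ℤ} (Δ : Seg) (h : Multiset Seg) (hc : Δ.a = c) :
    Upsilon Δ (atLeft h c) = Upsilon Δ h := by
  rw [Upsilon, Upsilon]
  rw [firstCand_atLeft Δ h hc]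

lemma atLeft_removal (Δ : Seg) (h : Multiset Seg) (hadm : SegAdm Δ h) :
    atLeft (removal Δ h) Δ.a = (atLeft h Δ.a).erase (Upsilon Δ h) := by
  have hne := (segAdm_iff_firstCand Δ h).mp hadm
  set F := (firstCand Δ h).min' hne with hF
  have hFmem := Finset.min'_mem _ hne
  rw [← hF] at hFmem
  simp only [firstCand, Finset.mem_filter, Multiset.mem_toFinset] at hFmem
  have hseq : removalSeq Δ h = F :: removalTail Δ h F := by rw [removalSeq, dif_pos hne]
  have hups : Upsilon Δ h = F := by rw [Upsilon, dif_pos hne]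
  have htail : ∀ x ∈ removalTail Δ h F, Δ.a < x.a := by
    intro x hx
    have := removalTail_a_lt Δ h (F.b - F.a).toNat F le_rfl x hx
    omega
  have htr : ∀ x ∈ truncs Δ (removalSeq Δ h), Δ.a < x.a := by
    rw [hseq]
    exact truncs_a Δ _ (fun y hy => htail y hy)
  rw [removal, atLeft, Multiset.filter_add, Multiset.filter_sub, hseq]
  have h1 : Multiset.filter (fun S => S.a = Δ.a) ((F :: removalTail Δ h F : List Seg) : Multiset Seg) = {F} := by
    rw [← Multiset.cons_coe, Multiset.filter_cons]
    rw [if_pos hFmem.2.1]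
    have : Multiset.filter (fun S => S.a = Δ.a) ((removalTail Δ h F : List Seg) : Multiset Seg) = 0 := by
      rw [Multiset.filter_eq_nil]
      intro a ha
      have := htail a (by exact_mod_cast ha)
      omega
    rw [this]
    simp
  have h2 : Multiset.filter (fun S => S.a = Δ.a) (truncs Δ (F :: removalTail Δ h F)) = 0 := by
    rw [Multiset.filter_eq_nil]
    intro a ha
    have := htr a (by rw [hseq]; exact ha)
    omega
  rw [h1, h2, hups, add_zero, Multiset.sub_singleton]
  rfl

noncomputable def gList : List Seg → Multiset Seg → Option (Multiset Seg)
  | [], _ => some 0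
  | Δ :: rest, A =>
    if SegAdm Δ A then (gList rest (A.erase (Upsilon Δ A))).map (Upsilon Δ A ::ₘ ·) else none

lemma sList_eq_gList (c : ℤ) :
    ∀ (l : List Seg) (h : Multiset Seg), (∀ d ∈ l, d.a = c) →
      sList l h = gList l (atLeft h c) := by
  intro l
  induction l with
  | nil => intro h _; rfl
  | cons d rest ih =>
    intro h hall
    have hdc : d.a = c := hall d (List.mem_cons_self)
    rw [sList, gList]
    by_cases hadm : SegAdm d h
    · rw [if_pos hadm, if_pos ((segAdm_atLeft d h hdc).mpr hadm)]
      rw [upsilon_atLeft d h hdc]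
      rw [ih (removal d h) (fun x hx => hall x (List.mem_cons_of_mem _ hx))]
      have : atLeft (removal d h) c = (atLeft h c).erase (Upsilon d h) := by
        rw [← hdc]
        exact atLeft_removal d h hadm
      rw [this]
    · rw [if_neg hadm, if_neg (fun hc => hadm ((segAdm_atLeft d h hdc).mp hc))]

end Aux3
section Aux4

lemma gList_all_c (c : ℤ) :
    ∀ (l : List Seg) (A : Multiset Seg) (s : Multiset Seg),
      (∀ z ∈ A, z.a = c) → gList l A = some s → ∀ z ∈ s, z.a = c := by
  intro l
  induction l with
  | nil =>
    intro A s _ hg z hz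
    rw [gList] at hg
    rw [← Option.some_inj.mp hg] at hz
    simp at hz
  | cons d rest ih =>
    intro A s hA hg z hz
    rw [gList] at hg
    split at hg
    · next hadm =>
      rcases Option.map_eq_some_iff.mp hg with ⟨t, ht, rfl⟩
      rcases Multiset.mem_cons.mp hz with rfl | hz'
      · exact hA _ (upsilon_spec hadm).1
      · exact ih _ t (fun w hw => hA w (Multiset.mem_of_mem_erase hw)) ht z hz'
    · exact absurd hg (by simp)

lemma list_count_map_fst_le (L : List (Seg × Seg)) (o : Seg)
    (h : ∀ p ∈ L, p.1 = o → p.2 = o) :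
    (L.map Prod.fst).count o ≤ (L.map Prod.snd).count o := by
  induction L with
  | nil => simp
  | cons p t ih =>
    have ih' := ih (fun q hq hq1 => h q (List.mem_cons_of_mem _ hq) hq1)
    simp only [List.map_cons, List.count_cons]
    by_cases h1 : p.1 = o
    · have h2 : p.2 = o := h p (List.mem_cons_self) h1
      simp [h1, h2]; omega
    · by_cases h2 : p.2 = o <;> simp [h1, h2] <;> omega

lemma erase_add_singleton {A : Multiset Seg} {o : Seg} (ho : o ∈ A) :
    A.erase o + {o} = A := by
  rw [add_comm, Multiset.singleton_add, Multiset.cons_erase ho]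

lemma gList_mono (c : ℤ) :
    ∀ (l₁ l₂ : List Seg) (A₁ A₂ : Multiset Seg) (L : List (Seg × Seg)) (s₂ : Multiset Seg),
      (∀ d ∈ l₁, d.a = c) → (∀ d ∈ l₂, d.a = c) →
      (∀ z ∈ A₁, z.a = c) → (∀ z ∈ A₂, z.a = c) →
      l₁.Pairwise (fun S T => S.b ≤ T.b) → l₂.Pairwise (fun S T => S.b ≤ T.b) →
      l₁.length = l₂.length →
      (∀ i (h1 : i < l₁.length) (h2 : i < l₂.length), (l₁.get ⟨i, h1⟩).b ≤ (l₂.get ⟨i, h2⟩).b) →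
      (∀ p ∈ L, p.1.b ≤ p.2.b ∧ p.1.a = c ∧ p.2.a = c) →
      A₁ + ↑(L.map Prod.fst) = A₂ + ↑(L.map Prod.snd) →
      (∀ p ∈ L, ∀ d' ∈ l₂, ∀ z ∈ A₂, d'.b ≤ z.b → p.2.b ≤ z.b) →
      gList l₂ A₂ = some s₂ →
      ∃ s₁, gList l₁ A₁ = some s₁ ∧
        ∃ L' : List (Seg × Seg), (∀ p ∈ L', p.1.b ≤ p.2.b) ∧
          s₂ + ↑(L'.map Prod.fst) = s₁ + ↑(L'.map Prod.snd) := by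
  intro l₁
  induction l₁ with
  | nil =>
    intro l₂ A₁ A₂ L s₂ _ _ _ _ _ _ hlen _ _ _ _ hg
    have hl₂ : l₂ = [] := List.eq_nil_of_length_eq_zero hlen.symm
    subst hl₂
    rw [gList] at hg
    refine ⟨0, rfl, [], by simp, ?_⟩
    rw [← Option.some_inj.mp hg]
    simp
  | cons d t₁ ih =>
    intro l₂ A₁ A₂ L s₂ hall₁ hall₂ hA₁ hA₂ hs₁ hs₂ hlen hpt hL heq hInv hg
    cases l₂ with
    | nil => simp at hlen
    | cons d' t₂ =>
      rw [gList] at hg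
      by_cases hadm' : SegAdm d' A₂
      swap
      · rw [if_neg hadm'] at hg; exact absurd hg (by simp)
      rw [if_pos hadm'] at hg
      rcases Option.map_eq_some_iff.mp hg with ⟨t₂s, ht₂s, rfl⟩
      set o' := Upsilon d' A₂ with ho'def
      obtain ⟨ho'mem, ho'a, ho'b⟩ := upsilon_spec hadm'
      rw [← ho'def] at ho'mem ho'a ho'b
      have hd'c : d'.a = c := hall₂ d' (List.mem_cons_self)
      have hdc : d.a = c := hall₁ d (List.mem_cons_self)
      have ho'c : o'.a = c := ho'a.trans hd'c
      have hdb : d.b ≤ d'.b := by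
        have := hpt 0 (by simp) (by simp)
        simpa using this
      -- o' ∈ A₁
      have ho'A₁ : o' ∈ A₁ := by
        have hcnt := congrArg (Multiset.count o') heq
        rw [Multiset.count_add, Multiset.count_add] at hcnt
        have hXY : (L.map Prod.fst).count o' ≤ (L.map Prod.snd).count o' := by
          apply list_count_map_fst_le
          intro p hp hp1
          have h1 := (hL p hp).1
          have h2 := hInv p hp d' (List.mem_cons_self) o' ho'mem ho'b
          have h3 : p.2.b = o'.b := by rw [hp1] at h1; omega
          exact Seg.ext ((hL p hp).2.2.trans ho'c.symm) h3
        rw [Multiset.coe_count, Multiset.coe_count] at hcnt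
        have hpos : 0 < Multiset.count o' A₂ := Multiset.count_pos.mpr ho'mem
        rw [← Multiset.count_pos]
        omega
      have hadm₁ : SegAdm d A₁ := ⟨o', ho'A₁, ho'c.trans hdc.symm, by omega⟩
      set o := Upsilon d A₁ with hodef
      obtain ⟨homem, hoa, hob⟩ := upsilon_spec hadm₁
      rw [← hodef] at homem hoa hob
      have hoc : o.a = c := hoa.trans hdc
      have hoo' : o.b ≤ o'.b := by
        have := upsilon_min hadm₁ ho'A₁ (ho'c.trans hdc.symm) (by omega)
        rw [← hodef] at this
        exact this
      -- apply induction hypothesis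
      have hmain := ih t₂ (A₁.erase o) (A₂.erase o') (L ++ [(o, o')]) t₂s
        (fun x hx => hall₁ x (List.mem_cons_of_mem _ hx))
        (fun x hx => hall₂ x (List.mem_cons_of_mem _ hx))
        (fun z hz => hA₁ z (Multiset.mem_of_mem_erase hz))
        (fun z hz => hA₂ z (Multiset.mem_of_mem_erase hz))
        hs₁.of_cons hs₂.of_cons
        (by simpa using Nat.succ_injective hlen)
        (by
          intro i h1 h2
          have := hpt (i+1) (by simpa using Nat.succ_lt_succ h1) (by simpa using Nat.succ_lt_succ h2)
          simpa using this)
        (by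
          intro p hp
          rcases List.mem_append.mp hp with hp | hp
          · exact hL p hp
          · rcases List.mem_singleton.mp hp with rfl
            exact ⟨hoo', hoc, ho'c⟩)
        (by
          have e1 : A₁.erase o + {o} = A₁ := erase_add_singleton homem
          have e2 : A₂.erase o' + {o'} = A₂ := erase_add_singleton ho'mem
          have : A₁.erase o + (↑(L.map Prod.fst) + {o}) = A₂.erase o' + (↑(L.map Prod.snd) + {o'}) := by
            calc A₁.erase o + (↑(L.map Prod.fst) + {o})
                = (A₁.erase o + {o}) + ↑(L.map Prod.fst) := by abel
              _ = A₁ + ↑(L.map Prod.fst) := by rw [e1]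
              _ = A₂ + ↑(L.map Prod.snd) := heq
              _ = (A₂.erase o' + {o'}) + ↑(L.map Prod.snd) := by rw [e2]
              _ = A₂.erase o' + (↑(L.map Prod.snd) + {o'}) := by abel
          simpa [← Multiset.coe_add] using this)
        (by
          intro p hp e he z hz hez
          have hzA₂ : z ∈ A₂ := Multiset.mem_of_mem_erase hz
          rcases List.mem_append.mp hp with hp | hp
          · exact hInv p hp e (List.mem_cons_of_mem _ he) z hzA₂ hez
          · rcases List.mem_singleton.mp hp with rfl
            have hd'e : d'.b ≤ e.b := (List.pairwise_cons.mp hs₂).1 e he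
            have := upsilon_min hadm' hzA₂ ((hA₂ z hzA₂).trans hd'c.symm) (by omega)
            rw [← ho'def] at this
            exact this)
        ht₂s
      obtain ⟨t₁s, ht₁s, L'', hL'', heqout⟩ := hmain
      refine ⟨o ::ₘ t₁s, ?_, L'' ++ [(o, o')], ?_, ?_⟩
      · rw [gList, if_pos hadm₁, ← hodef, ht₁s]
        rfl
      · intro p hp
        rcases List.mem_append.mp hp with hp | hp
        · exact hL'' p hp
        · rcases List.mem_singleton.mp hp with rfl
          exact hoo'
      · have : (o' ::ₘ t₂s) + (↑(L''.map Prod.fst) + {o}) = (o ::ₘ t₁s) + (↑(L''.map Prod.snd) + {o'}) := by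
          rw [← Multiset.singleton_add, ← Multiset.singleton_add]
          calc {o'} + t₂s + (↑(L''.map Prod.fst) + {o})
              = {o'} + {o} + (t₂s + ↑(L''.map Prod.fst)) := by abel
            _ = {o'} + {o} + (t₁s + ↑(L''.map Prod.snd)) := by rw [heqout]
            _ = {o} + t₁s + (↑(L''.map Prod.snd) + {o'}) := by abel
        simpa [← Multiset.coe_add] using this
end Aux4
section Aux5

lemma countP_pairs_le (t : ℤ) (L : List (Seg × Seg)) (hL : ∀ p ∈ L, p.1.b ≤ p.2.b) :
    (L.map Prod.fst).countP (fun S => t ≤ S.b) ≤ (L.map Prod.snd).countP (fun S => t ≤ S.b) := by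
  induction L with
  | nil => simp
  | cons p l ih =>
    have ih' := ih (fun q hq => hL q (List.mem_cons_of_mem _ hq))
    have hp := hL p (List.mem_cons_self)
    simp only [List.map_cons, List.countP_cons, List.countP_map] at ih' ⊢
    by_cases h1 : t ≤ p.1.b
    · have h2 : t ≤ p.2.b := by omega
      simp [h1, h2]; omega
    · by_cases h2 : t ≤ p.2.b <;> simp [h1, h2] <;> omega

lemma sorted_desc_of_sort (c : ℤ) (s : Multiset Seg) (hc : ∀ z ∈ s, z.a = c) :
    ((s.sort (· ≤ ·)).reverse).Pairwise (fun S T => T.b ≤ S.b) := by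
  rw [List.pairwise_reverse]
  have hsorted : (s.sort (· ≤ ·)).Pairwise (· ≤ ·) := Multiset.pairwise_sort s _
  apply List.Pairwise.imp_of_mem _ hsorted
  intro x y hx hy hxy
  exact seg_b_le_of_le hxy ((hc x ((Multiset.mem_sort _).mp hx)).trans
    (hc y ((Multiset.mem_sort _).mp hy)).symm)

lemma leAc_of_pairing (c : ℤ) (s₁ s₂ : Multiset Seg)
    (h₁ : ∀ z ∈ s₁, z.a = c) (h₂ : ∀ z ∈ s₂, z.a = c)
    (L : List (Seg × Seg)) (hL : ∀ p ∈ L, p.1.b ≤ p.2.b)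
    (heq : s₂ + ↑(L.map Prod.fst) = s₁ + ↑(L.map Prod.snd)) :
    leAc s₁ s₂ := by
  refine ⟨(s₁.sort (· ≤ ·)).reverse, (s₂.sort (· ≤ ·)).reverse, by simp, by simp,
    sorted_desc_of_sort c s₁ h₁, sorted_desc_of_sort c s₂ h₂, ?_, ?_⟩
  · have hcard : Multiset.card s₂ + L.length = Multiset.card s₁ + L.length := by
      have := congrArg Multiset.card heq
      simpa using this
    simp
    omega
  · apply ptwise_desc _ _ (sorted_desc_of_sort c s₁ h₁) (sorted_desc_of_sort c s₂ h₂)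
    · have hcard : Multiset.card s₂ + L.length = Multiset.card s₁ + L.length := by
        have := congrArg Multiset.card heq
        simpa using this
      simp
      omega
    · intro t
      have h1 : ∀ (s : Multiset Seg), ((s.sort (· ≤ ·)).reverse).countP (fun S => t ≤ S.b)
          = Multiset.countP (fun S => t ≤ S.b) s := by
        intro s
        have : ((s.sort (· ≤ ·)).reverse : Multiset Seg) = s := by simp
        rw [← Multiset.coe_countP, this]
      rw [h1, h1]
      have hcnt := congrArg (Multiset.countP (fun S => t ≤ S.b)) heq
      rw [Multiset.countP_add, Multiset.countP_add, Multiset.coe_countP, Multiset.coe_countP] at hcnt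
      have := countP_pairs_le t L hL
      omega

end Aux5
section Aux6

lemma sorted_asc_of_sort (c : ℤ) (s : Multiset Seg) (hc : ∀ z ∈ s, z.a = c) :
    (s.sort (· ≤ ·)).Pairwise (fun S T => S.b ≤ T.b) := by
  have hsorted : (s.sort (· ≤ ·)).Pairwise (· ≤ ·) := Multiset.pairwise_sort s _
  apply List.Pairwise.imp_of_mem _ hsorted
  intro x y hx hy hxy
  exact seg_b_le_of_le hxy ((hc x ((Multiset.mem_sort _).mp hx)).trans
    (hc y ((Multiset.mem_sort _).mp hy)).symm)

lemma sMulti_eq_gList (c : ℤ) (m h : Multiset Seg) (hmc : ∀ S ∈ m, S.a = c) :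
    sMulti m h = gList (m.sort (· ≤ ·)) (atLeft h c) :=
  sList_eq_gList c _ h (fun d hd => hmc d ((Multiset.mem_sort _).mp hd))

end Aux6
/-- (Single comparison lemma.)  If `m₂` is obtained from `m₁ ∈ Mult^a_c`
by replacing one segment `[c,b]` by a longer segment `[c,b'']`, then
`𝔰(m₁, 𝔥) ≤^a_c 𝔰(m₂, 𝔥)` (in the order extended by `∞ = none` on top). -/
theorem sMulti_single_comparison (c bb bb'' : ℤ) (hb : c ≤ bb) (hb'' : bb < bb'')
    (m₁ : Multiset Seg) (hmc : ∀ S ∈ m₁, S.a = c)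
    (hmem : (⟨c, bb, hb⟩ : Seg) ∈ m₁) (h : Multiset Seg) :
    leAcO (sMulti m₁ h)
      (sMulti (m₁.erase ⟨c, bb, hb⟩ + {(⟨c, bb'', hb.trans hb''.le⟩ : Seg)}) h) := by
  set Δ : Seg := ⟨c, bb, hb⟩ with hΔ
  set Δ'' : Seg := ⟨c, bb'', hb.trans hb''.le⟩ with hΔ''
  set m₂ : Multiset Seg := m₁.erase Δ + {Δ''} with hm₂
  have hmc₂ : ∀ S ∈ m₂, S.a = c := by
    intro S hS
    rw [hm₂, Multiset.mem_add] at hS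
    rcases hS with hS | hS
    · exact hmc S (Multiset.mem_of_mem_erase hS)
    · rw [Multiset.mem_singleton] at hS; subst hS; rfl
  have hAc : ∀ z ∈ atLeft h c, z.a = c := by
    intro z hz; exact (Multiset.mem_filter.mp hz).2
  have hkey : m₂ + {Δ} = m₁ + {Δ''} := by
    rw [hm₂]
    calc m₁.erase Δ + {Δ''} + {Δ} = (m₁.erase Δ + {Δ}) + {Δ''} := by abel
      _ = m₁ + {Δ''} := by rw [erase_add_singleton hmem]
  have hcard : Multiset.card m₂ = Multiset.card m₁ := by
    have := congrArg Multiset.card hkey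
    simp at this
    omega
  rcases hg2 : sMulti m₂ h with _ | s₂
  · cases hg1 : sMulti m₁ h <;> simp [leAcO]
  · rw [sMulti_eq_gList c m₂ h hmc₂] at hg2
    have hmain := gList_mono c (m₁.sort (· ≤ ·)) (m₂.sort (· ≤ ·))
      (atLeft h c) (atLeft h c) [] s₂
      (fun d hd => hmc d ((Multiset.mem_sort _).mp hd))
      (fun d hd => hmc₂ d ((Multiset.mem_sort _).mp hd))
      hAc hAc
      (sorted_asc_of_sort c m₁ hmc) (sorted_asc_of_sort c m₂ hmc₂)
      (by simp [hcard])
      (by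
        apply ptwise_asc _ _ (sorted_asc_of_sort c m₁ hmc) (sorted_asc_of_sort c m₂ hmc₂)
        · simp [hcard]
        · intro t
          have h1 : ∀ s : Multiset Seg, (s.sort (· ≤ ·)).countP (fun S => t ≤ S.b)
              = Multiset.countP (fun S => t ≤ S.b) s := by
            intro s
            have : ((s.sort (· ≤ ·)) : Multiset Seg) = s := by simp
            rw [← Multiset.coe_countP, this]
          rw [h1, h1]
          have hcnt := congrArg (Multiset.countP (fun S => t ≤ S.b)) hkey
          simp only [Multiset.countP_add] at hcnt
          have e1 : Multiset.countP (fun S => t ≤ S.b) ({Δ} : Multiset Seg)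
              = if t ≤ bb then 1 else 0 := by
            rw [show ({Δ} : Multiset Seg) = Δ ::ₘ 0 from rfl, Multiset.countP_cons]
            simp [hΔ]
          have e2 : Multiset.countP (fun S => t ≤ S.b) ({Δ''} : Multiset Seg)
              = if t ≤ bb'' then 1 else 0 := by
            rw [show ({Δ''} : Multiset Seg) = Δ'' ::ₘ 0 from rfl, Multiset.countP_cons]
            simp [hΔ'']
          rw [e1, e2] at hcnt
          split at hcnt <;> split at hcnt <;> omega)
      (by simp)
      (by simp)
      (by simp)
      hg2
    obtain ⟨s₁, hs₁, L', hL', heqout⟩ := hmain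
    rw [sMulti_eq_gList c m₁ h hmc, hs₁]
    show leAc s₁ s₂
    exact leAc_of_pairing c s₁ s₂
      (gList_all_c c _ _ _ hAc hs₁)
      (gList_all_c c _ _ _ hAc hg2)
      L' hL' heqout
end

section
/- (Combinatorial (†) criterion.) Let 𝔥 be a multisegment, Δ a segment admissible to 𝔥, and Δ' a segment linked to Δ with Δ < Δ'. Then the following are equivalent: (1) for the shortest segment Δ̄ in the removal sequence for (Δ, 𝔥) containing the point a(Δ')−1, one has Δ' ⊄ Δ̄ [the (†) property]; (3) there exists a segment Δ̃ ∈ 𝔥 with a(Δ) ≤ a(Δ̃) < a(Δ') and b(Δ) ≤ b(Δ̃) < b(Δ'). -/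
set_option linter.unusedVariables false

section Aux

lemma Seg.le_iff' {S T : Seg} : S ≤ T ↔ S.a < T.a ∨ (S.a = T.a ∧ S.b ≤ T.b) := by
  show toLex (S.a, S.b) ≤ toLex (T.a, T.b) ↔ _
  rw [Prod.Lex.le_iff]
  exact Iff.rfl

lemma mem_nextCand {Δ prev S : Seg} {h : Multiset Seg} :
    S ∈ nextCand Δ prev h ↔ S ∈ h ∧ prev.a < S.a ∧ S.b < prev.b ∧ Δ.b ≤ S.b := by
  simp [nextCand, Multiset.mem_toFinset, and_assoc]

lemma mem_firstCand {Δ S : Seg} {h : Multiset Seg} :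
    S ∈ firstCand Δ h ↔ S ∈ h ∧ S.a = Δ.a ∧ Δ.b ≤ S.b := by
  simp [firstCand, Multiset.mem_toFinset, and_assoc]

lemma removalTail_mem (Δ : Seg) (h : Multiset Seg) :
    ∀ (n : ℕ) (prev : Seg), (prev.b - prev.a).toNat ≤ n →
      ∀ S ∈ removalTail Δ h prev, S ∈ h ∧ prev.a < S.a ∧ S.b < prev.b ∧ Δ.b ≤ S.b := by
  intro n
  induction n using Nat.strong_induction_on with
  | _ n ih =>
    intro prev hn S hS
    rw [removalTail] at hS
    split_ifs at hS with hc
    · have hmem := Finset.min'_mem _ hc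
      rw [mem_nextCand] at hmem
      obtain ⟨hm1, hm2, hm3, hm4⟩ := hmem
      rcases List.mem_cons.mp hS with rfl | hS'
      · exact ⟨hm1, hm2, hm3, hm4⟩
      · have hle := ((nextCand Δ prev h).min' hc).hle
        have hlt : ((((nextCand Δ prev h).min' hc).b -
            ((nextCand Δ prev h).min' hc).a).toNat) < n := by omega
        obtain ⟨h1, h2, h3, h4⟩ := ih _ hlt _ le_rfl S hS'
        exact ⟨h1, by omega, by omega, h4⟩
    · simp at hS

lemma removalTail_pairwise (Δ : Seg) (h : Multiset Seg) :
    ∀ (n : ℕ) (prev : Seg), (prev.b - prev.a).toNat ≤ n →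
      (removalTail Δ h prev).Pairwise (fun S T => S.a < T.a ∧ T.b < S.b) := by
  intro n
  induction n using Nat.strong_induction_on with
  | _ n ih =>
    intro prev hn
    rw [removalTail]
    split_ifs with hc
    · have hmem := Finset.min'_mem _ hc
      rw [mem_nextCand] at hmem
      obtain ⟨hm1, hm2, hm3, hm4⟩ := hmem
      have hle := ((nextCand Δ prev h).min' hc).hle
      have hlt : ((((nextCand Δ prev h).min' hc).b -
          ((nextCand Δ prev h).min' hc).a).toNat) < n := by omega
      refine List.Pairwise.cons ?_ (ih _ hlt _ le_rfl)
      intro T hT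
      obtain ⟨-, h2, h3, -⟩ := removalTail_mem Δ h _ _ le_rfl T hT
      exact ⟨h2, h3⟩
    · exact List.Pairwise.nil

lemma removalTail_key (Δ Δt : Seg) (h : Multiset Seg) (ht : Δt ∈ h) (hb : Δ.b ≤ Δt.b) :
    ∀ (n : ℕ) (prev : Seg), (prev.b - prev.a).toNat ≤ n → prev.a < Δt.a → Δt.b < prev.b →
      ∃ T ∈ removalTail Δ h prev, T.a ≤ Δt.a ∧ T.b ≤ Δt.b := by
  intro n
  induction n using Nat.strong_induction_on with
  | _ n ih =>
    intro prev hn ha hb'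
    have hcm : Δt ∈ nextCand Δ prev h := mem_nextCand.mpr ⟨ht, ha, hb', hb⟩
    have hc : (nextCand Δ prev h).Nonempty := ⟨Δt, hcm⟩
    have hmin : (nextCand Δ prev h).min' hc ≤ Δt := Finset.min'_le _ _ hcm
    have hmem := Finset.min'_mem _ hc
    rw [mem_nextCand] at hmem
    obtain ⟨hm1, hm2, hm3, hm4⟩ := hmem
    rw [removalTail, dif_pos hc]
    set m := (nextCand Δ prev h).min' hc with hm
    rcases Seg.le_iff'.mp hmin with hlt | ⟨heq, hble⟩
    · by_cases hbb : m.b ≤ Δt.b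
      · exact ⟨m, List.mem_cons_self, le_of_lt hlt, hbb⟩
      · have hle := m.hle
        have hmlt : ((m.b - m.a).toNat) < n := by omega
        obtain ⟨T, hT, hT1, hT2⟩ := ih _ hmlt m le_rfl hlt (by omega)
        exact ⟨T, List.mem_cons_of_mem _ hT, hT1, hT2⟩
    · exact ⟨m, List.mem_cons_self, le_of_eq heq, hble⟩

lemma removalSeq_mem (Δ : Seg) (h : Multiset Seg) :
    ∀ S ∈ removalSeq Δ h, S ∈ h ∧ Δ.a ≤ S.a ∧ Δ.b ≤ S.b := by
  intro S hS
  rw [removalSeq] at hS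
  split_ifs at hS with hc
  · have hmem := Finset.min'_mem _ hc
    rw [mem_firstCand] at hmem
    obtain ⟨h1, h2, h3⟩ := hmem
    rcases List.mem_cons.mp hS with rfl | hS'
    · exact ⟨h1, le_of_eq h2.symm, h3⟩
    · obtain ⟨g1, g2, g3, g4⟩ := removalTail_mem Δ h _ _ le_rfl S hS'
      exact ⟨g1, by omega, g4⟩
  · simp at hS

lemma removalSeq_pairwise (Δ : Seg) (h : Multiset Seg) :
    (removalSeq Δ h).Pairwise (fun S T => S.a < T.a ∧ T.b < S.b) := by
  rw [removalSeq]
  split_ifs with hc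
  · have hmem := Finset.min'_mem _ hc
    rw [mem_firstCand] at hmem
    obtain ⟨h1, h2, h3⟩ := hmem
    refine List.Pairwise.cons ?_ (removalTail_pairwise Δ h _ _ le_rfl)
    intro T hT
    obtain ⟨-, g2, g3, -⟩ := removalTail_mem Δ h _ _ le_rfl T hT
    exact ⟨g2, g3⟩
  · exact List.Pairwise.nil

lemma exists_min_b : ∀ (l : List Seg), l ≠ [] → ∃ m ∈ l, ∀ x ∈ l, m.b ≤ x.b := by
  intro l
  induction l with
  | nil => intro hh; exact absurd rfl hh
  | cons y ys ih =>
    intro _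
    rcases eq_or_ne ys [] with rfl | hne
    · exact ⟨y, List.mem_cons_self, by
        intro x hx; rcases List.mem_cons.mp hx with rfl | hx'
        · exact le_refl _
        · simp at hx'⟩
    · obtain ⟨m, hm, hmin⟩ := ih hne
      by_cases hyb : y.b ≤ m.b
      · refine ⟨y, List.mem_cons_self, ?_⟩
        intro x hx
        rcases List.mem_cons.mp hx with rfl | hx'
        · exact le_refl _
        · exact le_trans hyb (hmin x hx')
      · refine ⟨m, List.mem_cons_of_mem _ hm, ?_⟩
        intro x hx
        rcases List.mem_cons.mp hx with rfl | hx'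
        · omega
        · exact hmin x hx'

end Aux

/-- (Combinatorial (†) criterion.)  For `Δ` admissible to `𝔥` and `Δ'`
linked to `Δ` with `Δ < Δ'`: the shortest segment `Δ̄` of the removal sequence for
`(Δ, 𝔥)` containing the point `a(Δ') − 1` satisfies `Δ' ⊄ Δ̄`  ⟺  there exists
`Δ̃ ∈ 𝔥` with `a(Δ) ≤ a(Δ̃) < a(Δ')` and `b(Δ) ≤ b(Δ̃) < b(Δ')`. -/
theorem dagger_criterion (Δ Δ' : Seg) (h : Multiset Seg)
    (hadm : SegAdm Δ h) (hlt : Seg.lt' Δ Δ') :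
    (∃ Δbar ∈ removalSeq Δ h,
        (Δbar.a ≤ Δ'.a - 1 ∧ Δ'.a - 1 ≤ Δbar.b) ∧
        (∀ S ∈ removalSeq Δ h, (S.a ≤ Δ'.a - 1 ∧ Δ'.a - 1 ≤ S.b) → Δbar.Sub S) ∧
        ¬ Δ'.Sub Δbar)
    ↔ (∃ Δt ∈ h, Δ.a ≤ Δt.a ∧ Δt.a < Δ'.a ∧ Δ.b ≤ Δt.b ∧ Δt.b < Δ'.b) := by
  obtain ⟨⟨hl1, hl2, hl3, hl4⟩, hbb⟩ := hlt
  simp only [Seg.Sub, not_and, not_le] at hl3 hl4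
  have haa : Δ.a < Δ'.a := by
    by_contra hcon
    exact absurd (le_of_lt hbb) (not_le.mpr (hl3 (by omega)))
  constructor
  · rintro ⟨Δbar, hmem, ⟨hc1, hc2⟩, hminim, hnsub⟩
    obtain ⟨g1, g2, g3⟩ := removalSeq_mem Δ h Δbar hmem
    simp only [Seg.Sub, not_and, not_le] at hnsub
    exact ⟨Δbar, g1, g2, by omega, g3, hnsub (by omega)⟩
  · rintro ⟨Δt, htm, h5, h6, h7, h8⟩
    -- get T ∈ removalSeq with T.a ≤ Δt.a and T.b ≤ Δt.b
    obtain ⟨Δ0, hΔ0, ha0, hb0⟩ := hadm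
    have hfc : (firstCand Δ h).Nonempty := ⟨Δ0, mem_firstCand.mpr ⟨hΔ0, ha0, hb0⟩⟩
    have hseq : removalSeq Δ h =
        (firstCand Δ h).min' hfc :: removalTail Δ h ((firstCand Δ h).min' hfc) := by
      rw [removalSeq, dif_pos hfc]
    set Δ₁ := (firstCand Δ h).min' hfc with hΔ₁
    have h1mem := Finset.min'_mem _ hfc
    rw [mem_firstCand] at h1mem
    obtain ⟨h11, h12, h13⟩ := h1mem
    rw [← hΔ₁] at h11 h12 h13
    have hT : ∃ T ∈ removalSeq Δ h, T.a ≤ Δt.a ∧ T.b ≤ Δt.b := by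
      by_cases hb1 : Δ₁.b ≤ Δt.b
      · exact ⟨Δ₁, by rw [hseq]; exact List.mem_cons_self, by omega, hb1⟩
      · have hastrict : Δ.a < Δt.a := by
          rcases eq_or_lt_of_le h5 with heq | hlt2
          · exfalso
            have htf : Δt ∈ firstCand Δ h := mem_firstCand.mpr ⟨htm, heq.symm, h7⟩
            have : Δ₁ ≤ Δt := hΔ₁ ▸ Finset.min'_le _ _ htf
            rcases Seg.le_iff'.mp this with hx | ⟨-, hx⟩ <;> omega
          · exact hlt2
        obtain ⟨T, hTmem, hT1, hT2⟩ := removalTail_key Δ Δt h htm h7 _ Δ₁ le_rfl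
          (by omega) (by omega)
        exact ⟨T, by rw [hseq]; exact List.mem_cons_of_mem _ hTmem, hT1, hT2⟩
    obtain ⟨T, hTmem, hT1, hT2⟩ := hT
    -- the filtered list of segments containing the point Δ'.a - 1
    set l := (removalSeq Δ h).filter (fun S => decide (S.a ≤ Δ'.a - 1)) with hl
    have hTl : T ∈ l := by
      rw [hl, List.mem_filter]
      exact ⟨hTmem, by simp; omega⟩
    have hlne : l ≠ [] := fun hemp => by rw [hemp] at hTl; simp at hTl
    obtain ⟨Δbar, hbl, hbmin⟩ := exists_min_b l hlne
    have hbarseq : Δbar ∈ removalSeq Δ h := (List.mem_filter.mp hbl).1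
    have hbara : Δbar.a ≤ Δ'.a - 1 := by
      have := (List.mem_filter.mp hbl).2; simpa using this
    obtain ⟨gb1, gb2, gb3⟩ := removalSeq_mem Δ h Δbar hbarseq
    have hpw := removalSeq_pairwise Δ h
    have hpw' : (removalSeq Δ h).Pairwise
        (fun S T => (S.a < T.a ∧ T.b < S.b) ∨ (T.a < S.a ∧ S.b < T.b)) :=
      hpw.imp Or.inl
    have hsymm : Symmetric (fun S T : Seg =>
        (S.a < T.a ∧ T.b < S.b) ∨ (T.a < S.a ∧ S.b < T.b)) := by
      intro x y hxy; tauto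
    refine ⟨Δbar, hbarseq, ⟨hbara, by omega⟩, ?_, ?_⟩
    · intro S hS ⟨hS1, hS2⟩
      have hSl : S ∈ l := by
        rw [hl, List.mem_filter]; exact ⟨hS, by simp; omega⟩
      have hbS : Δbar.b ≤ S.b := hbmin S hSl
      rcases eq_or_ne S Δbar with rfl | hne
      · exact ⟨le_refl _, le_refl _⟩
      · have := (haveI : Std.Symm (fun S T : Seg => (S.a < T.a ∧ T.b < S.b) ∨ (T.a < S.a ∧ S.b < T.b)) := ⟨fun a b hab => hsymm hab⟩; hpw'.forall hS hbarseq hne)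
        rcases this with ⟨hx1, hx2⟩ | ⟨hx1, hx2⟩
        · exact ⟨le_of_lt hx1, hbS⟩
        · omega
    · have hbarb : Δbar.b ≤ T.b := hbmin T hTl
      simp only [Seg.Sub, not_and, not_le]
      intro _
      omega
end

section
/- (η-invariant and the (†) property.) Let 𝔥 be a multisegment, Δ admissible to 𝔥, Δ' = [a', b'] linked to Δ with Δ < Δ'. Suppose there exists a segment Δ̃ ∈ 𝔥 with a(Δ) ≤ a(Δ̃) < a' and b(Δ) ≤ b(Δ̃) < b'. Then η_{Δ'}(𝔥) = η_{Δ'}(𝔯(Δ, 𝔥)), i.e., ε_{[x, b']}(𝔥) = ε_{[x,b']}(𝔯(Δ, 𝔥)) for all a' ≤ x ≤ b'. -/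
set_option linter.unusedVariables false

lemma seg_le_iff_s15 (s t : Seg) : s ≤ t ↔ s.a < t.a ∨ (s.a = t.a ∧ s.b ≤ t.b) := by
  have h0 : s ≤ t ↔ toLex ((s.a, s.b) : ℤ × ℤ) ≤ toLex ((t.a, t.b) : ℤ × ℤ) := Iff.rfl
  rw [h0, Prod.Lex.le_iff]
  exact Iff.rfl

lemma mem_seg?_s15 {t : Seg} {x y : ℤ} (h : t ∈ seg? x y) : t.a = x ∧ t.b = y := by
  unfold seg? at h
  split at h
  · simp only [Multiset.mem_singleton] at h
    subst h; exact ⟨rfl, rfl⟩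
  · simp at h

lemma eps_eq_aux (x y : ℤ) (h s t : Multiset Seg)
    (hs : ∀ e ∈ s, ¬(e.a = x ∧ y ≤ e.b)) (ht : ∀ e ∈ t, ¬(e.a = x ∧ y ≤ e.b)) :
    eps x y (h - s + t) = eps x y h := by
  unfold eps
  rw [Multiset.filter_add, Multiset.filter_sub,
      Multiset.filter_eq_nil.mpr hs, Multiset.filter_eq_nil.mpr ht]
  simp

lemma tail_good (Δ Δ' Δt : Seg) (h : Multiset Seg)
    (hmem : Δt ∈ h) (hb1 : Δ.b ≤ Δt.b) (hb2 : Δt.b < Δ'.b) (ha2 : Δt.a < Δ'.a)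
    (prev : Seg) (hI : Δ'.b ≤ prev.b → prev.a < Δt.a) :
    (∀ e ∈ prev :: removalTail Δ h prev, Δ'.b ≤ e.b → e.a < Δt.a) ∧
    (∀ t ∈ truncs Δ (prev :: removalTail Δ h prev), Δ'.b ≤ t.b → t.a < Δ'.a) := by
  rw [removalTail]
  split_ifs with hc
  · have hnmem := Finset.min'_mem (nextCand Δ prev h) hc
    obtain ⟨hnh, hna, hnb, hnb2⟩ := Finset.mem_filter.mp hnmem
    have hInxt : Δ'.b ≤ ((nextCand Δ prev h).min' hc).b → ((nextCand Δ prev h).min' hc).a < Δt.a := by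
      intro hbn
      have hprev : Δ'.b ≤ prev.b := le_of_lt (lt_of_le_of_lt hbn hnb)
      have hpa := hI hprev
      have htmem : Δt ∈ nextCand Δ prev h := by
        simp only [nextCand, Finset.mem_filter, Multiset.mem_toFinset]
        exact ⟨hmem, hpa, lt_of_lt_of_le hb2 hprev, hb1⟩
      have hle : (nextCand Δ prev h).min' hc ≤ Δt := Finset.min'_le _ _ htmem
      rcases (seg_le_iff_s15 _ _).mp hle with h1 | ⟨h1, h2⟩
      · exact h1
      · omega
    have ih := tail_good Δ Δ' Δt h hmem hb1 hb2 ha2 ((nextCand Δ prev h).min' hc) hInxt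
    constructor
    · intro e he hbe
      rcases List.mem_cons.mp he with rfl | he'
      · exact hI hbe
      · exact ih.1 e he' hbe
    · intro t ht hbt
      rw [show truncs Δ (prev :: ((nextCand Δ prev h).min' hc) :: removalTail Δ h ((nextCand Δ prev h).min' hc))
            = seg? ((nextCand Δ prev h).min' hc).a prev.b + truncs Δ (((nextCand Δ prev h).min' hc) :: removalTail Δ h ((nextCand Δ prev h).min' hc)) from rfl] at ht
      rcases Multiset.mem_add.mp ht with ht1 | ht2
      · obtain ⟨hta, htb⟩ := mem_seg?_s15 ht1
        have hprev : Δ'.b ≤ prev.b := htb ▸ hbt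
        have hpa := hI hprev
        have htmem : Δt ∈ nextCand Δ prev h := by
          simp only [nextCand, Finset.mem_filter, Multiset.mem_toFinset]
          exact ⟨hmem, hpa, lt_of_lt_of_le hb2 hprev, hb1⟩
        have hle : (nextCand Δ prev h).min' hc ≤ Δt := Finset.min'_le _ _ htmem
        have hle' : ((nextCand Δ prev h).min' hc).a ≤ Δt.a := by
          rcases (seg_le_iff_s15 _ _).mp hle with h1 | ⟨h1, _⟩
          · exact le_of_lt h1
          · exact le_of_eq h1
        omega
      · exact ih.2 t ht2 hbt
  · constructor
    · intro e he hbe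
      rcases List.mem_cons.mp he with rfl | he'
      · exact hI hbe
      · simp at he'
    · intro t ht hbt
      rw [show truncs Δ [prev] = seg? (Δ.b + 1) prev.b from rfl] at ht
      obtain ⟨hta, htb⟩ := mem_seg?_s15 ht
      have hprev : Δ'.b ≤ prev.b := htb ▸ hbt
      have hpa := hI hprev
      exact absurd ⟨Δt, by
        simp only [nextCand, Finset.mem_filter, Multiset.mem_toFinset]
        exact ⟨hmem, hpa, lt_of_lt_of_le hb2 hprev, hb1⟩⟩ hc
termination_by (prev.b - prev.a).toNat
decreasing_by
  have := ((nextCand Δ prev h).min' hc).hle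
  omega

/-- (η-invariant and the (†) property.)  If there exists `Δ̃ ∈ 𝔥` with
`a(Δ) ≤ a(Δ̃) < a(Δ')` and `b(Δ) ≤ b(Δ̃) < b(Δ')`, then
`η_{Δ'}(𝔥) = η_{Δ'}(𝔯(Δ, 𝔥))`, i.e. `ε_{[x,b(Δ')]}` agree for all `a(Δ') ≤ x ≤ b(Δ')`. -/
theorem eta_unchanged_of_witness (Δ Δ' : Seg) (h : Multiset Seg)
    (hadm : SegAdm Δ h) (hlt : Seg.lt' Δ Δ')
    (hex : ∃ Δt ∈ h, Δ.a ≤ Δt.a ∧ Δt.a < Δ'.a ∧ Δ.b ≤ Δt.b ∧ Δt.b < Δ'.b) :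
    ∀ x, Δ'.a ≤ x → x ≤ Δ'.b → eps x Δ'.b h = eps x Δ'.b (removal Δ h) := by
  obtain ⟨Δt, htmem, hta1, hta2, htb1, htb2⟩ := hex
  intro x hx1 hx2
  unfold removal removalSeq
  split_ifs with hc
  · have hfmem := Finset.min'_mem (firstCand Δ h) hc
    set fst := (firstCand Δ h).min' hc with hfst
    obtain ⟨hfh, hfa, hfb⟩ := Finset.mem_filter.mp hfmem
    have hI : Δ'.b ≤ fst.b → fst.a < Δt.a := by
      intro hbf
      rcases lt_or_eq_of_le hta1 with h1 | h1
      · omega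
      · have htc : Δt ∈ firstCand Δ h := by
          simp only [firstCand, Finset.mem_filter, Multiset.mem_toFinset]
          exact ⟨htmem, h1.symm, htb1⟩
        have hle : fst ≤ Δt := Finset.min'_le _ _ htc
        rcases (seg_le_iff_s15 _ _).mp hle with h2 | ⟨h2, h3⟩ <;> omega
    have key := tail_good Δ Δ' Δt h htmem htb1 htb2 hta2 fst hI
    symm
    apply eps_eq_aux
    · intro e he hp
      obtain ⟨hex', heb⟩ := hp
      have := key.1 e (Multiset.mem_coe.mp he) heb
      omega
    · intro e he hp
      obtain ⟨hex', heb⟩ := hp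
      have := key.2 e he heb
      omega
  · rw [show truncs Δ [] = 0 from rfl]
    simp
end
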